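/- Let p ≥ 3 be a prime, χ a Dirichlet character mod p^α with α ≥ 1, and n an integer. Then |G(n,χ;p^α)|² = Σ'_{a=1}^{p^α} χ(a) · Σ'_{b=1}^{p^α} e(n·b²·(a²-1)/p^α), where Σ' denotes summation over residues coprime to p. -/

import Mathlib

/-!
In `ZMod q`, `q = p^α`, the map `x ↦ e(x/q)` is an additive character `ψ`. Expanding
`|G|² = Ḡ·G` gives `Σ_{x,y} χ(x) χ̄(y) ψ(n(x² - y²))`, in which only units `y` contribute. For a
unit `y` the substitution `x = a·y` turns `χ(x) χ̄(y)` into `χ(a)` and `x² - y²` into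
`y²(a² - 1)`; exchanging the two sums gives the identity, with `a` restricted to units because
`χ` vanishes elsewhere.
-/

open Complex

/-- The generalized quadratic Gauss sum `G(n,χ;q) = Σ_{a=1}^{q} χ(a)·e(n·a²/q)`. -/
noncomputable def Ggen (n : ℤ) (q : ℕ) (χ : DirichletCharacter ℂ q) : ℂ :=
  ∑ a ∈ Finset.Icc 1 q,
    χ (a : ZMod q) * Complex.exp (2 * Real.pi * Complex.I * (n * (a : ℂ) ^ 2 / (q : ℂ)))

open Finset

theorem MulChar.star_mul_apply_mul_of_isUnit {R : Type*} [CommRing R] [Finite Rˣ]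
    (χ : MulChar R ℂ) {u : R} (hu : IsUnit u) (a : R) :
    starRingEnd ℂ (χ u) * χ (a * u) = χ a := by
  rw [map_mul, ← RCLike.star_def, MulChar.star_apply', mul_left_comm, ← MulChar.mul_apply,
    MulChar.inv_mul, MulChar.one_apply hu, mul_one]

section QuadraticCharacterSum

variable {R : Type*} [CommRing R] [Fintype R] (χ : MulChar R ℂ) (ψ : AddChar R ℂ) (c : R)

theorem star_mul_sum_mulChar_mul_addChar_sq_sub_sq {u : R} (hu : IsUnit u) :
    starRingEnd ℂ (χ u) * ∑ x, χ x * ψ (c * x ^ 2 - c * u ^ 2) =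
      ∑ a, χ a * ψ (c * u ^ 2 * (a ^ 2 - 1)) := by
  rw [mul_sum, ← Equiv.sum_comp (Units.mulRight hu.unit)]
  refine sum_congr rfl fun a _ => ?_
  rw [Units.mulRight_apply, IsUnit.unit_spec, ← mul_assoc, χ.star_mul_apply_mul_of_isUnit hu]
  ring_nf

theorem norm_sq_sum_mulChar_mul_addChar_sq [DecidablePred (IsUnit : R → Prop)] :
    (‖∑ x, χ x * ψ (c * x ^ 2)‖ : ℂ) ^ 2 =
      ∑ a with IsUnit a, χ a * ∑ b with IsUnit b, ψ (c * b ^ 2 * (a ^ 2 - 1)) := by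
  set G := ∑ x, χ x * ψ (c * x ^ 2)
  calc (‖G‖ : ℂ) ^ 2 = starRingEnd ℂ G * G := (conj_mul' G).symm
    _ = ∑ y, starRingEnd ℂ (χ y) * ∑ x, χ x * ψ (c * x ^ 2 - c * y ^ 2) := by
      rw [map_sum, sum_mul]
      refine sum_congr rfl fun y _ => ?_
      rw [map_mul, ← AddChar.map_neg_eq_conj, mul_assoc, mul_sum, mul_sum, mul_sum]
      refine sum_congr rfl fun x _ => ?_
      rw [sub_eq_neg_add, AddChar.map_add_eq_mul]
      ring
    _ = ∑ y : R with IsUnit y, ∑ a, χ a * ψ (c * y ^ 2 * (a ^ 2 - 1)) := by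
      rw [sum_filter]
      refine sum_congr rfl fun y _ => ?_
      split_ifs with hy
      · exact star_mul_sum_mulChar_mul_addChar_sq_sub_sq χ ψ c hy
      · rw [χ.map_nonunit hy, map_zero, zero_mul]
    _ = ∑ a, χ a * ∑ b with IsUnit b, ψ (c * b ^ 2 * (a ^ 2 - 1)) := by
      rw [sum_comm]
      simp_rw [mul_sum]
    _ = _ := by
      refine (sum_filter_of_ne fun a _ ha => ?_).symm
      by_contra h
      exact ha (by rw [χ.map_nonunit h, zero_mul])

end QuadraticCharacterSum

theorem ZMod.sum_Icc_one_natCast (q : ℕ) [NeZero q] {M : Type*} [AddCommMonoid M]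
    (f : ZMod q → M) : ∑ a ∈ Icc 1 q, f a = ∑ x, f x := by
  have hrange : ∑ i ∈ range q, f (1 + i) = ∑ x, f (1 + x) :=
    sum_nbij' (↑) ZMod.val (by simp) (fun x _ => by simpa using x.val_lt)
      (fun i hi => ZMod.val_cast_of_lt (by simpa using hi)) (fun x _ => ZMod.natCast_zmod_val x)
      (fun _ _ => rfl)
  rw [← Ico_add_one_right_eq_Icc, sum_Ico_eq_sum_range, add_tsub_cancel_right]
  push_cast
  rw [hrange]
  exact Equiv.sum_comp (Equiv.addLeft (1 : ZMod q)) f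

theorem ZMod.sum_Icc_one_filter_coprime (q : ℕ) [NeZero q] {M : Type*} [AddCommMonoid M]
    [DecidablePred (IsUnit : ZMod q → Prop)] (f : ZMod q → M) :
    ∑ a ∈ Icc 1 q with a.Coprime q, f a = ∑ x with IsUnit x, f x := by
  rw [sum_filter, sum_filter, ← ZMod.sum_Icc_one_natCast q]
  simp_rw [ZMod.isUnit_iff_coprime]

theorem Ggen_eq_sum_stdAddChar (n : ℤ) (q : ℕ) [NeZero q] (χ : DirichletCharacter ℂ q) :
    Ggen n q χ = ∑ x, χ x * ZMod.stdAddChar ((n : ZMod q) * x ^ 2) := by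
  rw [Ggen, ← ZMod.sum_Icc_one_natCast]
  refine sum_congr rfl fun a _ => ?_
  have h := ZMod.stdAddChar_coe (N := q) (n * a ^ 2)
  push_cast at h
  rw [h, ← mul_div_assoc]

theorem Ggen_abs_sq_general (p : ℕ) [Fact p.Prime] (α : ℕ) (hα : 1 ≤ α)
    (χ : DirichletCharacter ℂ (p ^ α)) (n : ℤ) :
    ((‖Ggen n (p ^ α) χ‖ : ℂ)) ^ 2 =
      ∑ a ∈ (Finset.Icc 1 (p ^ α)).filter (fun a => Nat.Coprime a p),
        χ (a : ZMod (p ^ α)) *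
          ∑ b ∈ (Finset.Icc 1 (p ^ α)).filter (fun b => Nat.Coprime b p),
            Complex.exp (2 * Real.pi * Complex.I *
              (n * (b : ℂ) ^ 2 * ((a : ℂ) ^ 2 - 1) / (p : ℂ) ^ α)) := by
  have : NeZero (p ^ α) := ⟨pow_ne_zero α (Fact.out : p.Prime).ne_zero⟩
  classical
  have hcoprime : (Icc 1 (p ^ α)).filter (fun a => a.Coprime p) =
      (Icc 1 (p ^ α)).filter (fun a => a.Coprime (p ^ α)) :=
    filter_congr fun a _ => (Nat.coprime_pow_right_iff hα a p).symm
  have hexp (a b : ℕ) :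
      exp (2 * Real.pi * I * (n * (b : ℂ) ^ 2 * ((a : ℂ) ^ 2 - 1) / (p : ℂ) ^ α)) =
        ZMod.stdAddChar ((n : ZMod (p ^ α)) * (b : ZMod (p ^ α)) ^ 2 *
          ((a : ZMod (p ^ α)) ^ 2 - 1)) := by
    have h := ZMod.stdAddChar_coe (N := p ^ α) (n * b ^ 2 * (a ^ 2 - 1))
    push_cast at h
    rw [h, ← mul_div_assoc]
  simp_rw [hexp]
  rw [hcoprime, Ggen_eq_sum_stdAddChar, norm_sq_sum_mulChar_mul_addChar_sq]
  simp_rw [← ZMod.sum_Icc_one_filter_coprime (p ^ α)]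

/-- for an odd prime `p`, `α ≥ 1`, a character `χ` mod `p^α` and any `n`,
`|G(n,χ;p^α)|² = Σ'_a χ(a) Σ'_b e(n·b²·(a²-1)/p^α)`, the primed sums being over
residues `1 ≤ a, b ≤ p^α` coprime to `p`. -/
theorem Ggen_abs_sq (p : ℕ) [Fact p.Prime] (hp : 3 ≤ p) (α : ℕ) (hα : 1 ≤ α)
    (χ : DirichletCharacter ℂ (p ^ α)) (n : ℤ) :
    ((‖Ggen n (p ^ α) χ‖ : ℂ)) ^ 2 =
      ∑ a ∈ (Finset.Icc 1 (p ^ α)).filter (fun a => Nat.Coprime a p),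
        χ (a : ZMod (p ^ α)) *
          ∑ b ∈ (Finset.Icc 1 (p ^ α)).filter (fun b => Nat.Coprime b p),
            Complex.exp (2 * Real.pi * Complex.I *
              (n * (b : ℂ) ^ 2 * ((a : ℂ) ^ 2 - 1) / (p : ℂ) ^ α)) :=
  Ggen_abs_sq_general p α hα χ n
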